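/- arXiv:2110.10106 — 4 statements merged into one kernel-verified Lean document; each statement's English description precedes it below -/
import Mathlib

section
/- Let G be a connected simple graph on a finite vertex set V with |V| = n ≥ 2, m edges, and diameter D. Then the second smallest eigenvalue (counted with multiplicity) of the graph Laplacian matrix L(G) satisfies λ₂(L(G)) ≤ 2m / D². -/
/-!
Let `u, v` be vertices at distance `D` and let `f` be `dist u ·` minus its mean. Since `G` is
connected, the kernel of `L` is spanned by the constant vector, to which `f` is orthogonal, so the
Rayleigh quotient gives `λ₂ ‖f‖² ≤ fᵀ L f`. Along an edge `f` changes by at most one, hence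
`fᵀ L f = ∑_{ij ∈ E} (f i - f j)² ≤ m`, while `f v - f u = D` forces `‖f‖² ≥ D² / 2`.
-/

open Matrix Finset

/-- The list of eigenvalues (counted with multiplicity) of a Hermitian real matrix, sorted
in nondecreasing order. -/
noncomputable def sortedEigenvalues {n : Type*} [Fintype n] [DecidableEq n]
    {A : Matrix n n ℝ} (hA : A.IsHermitian) : List ℝ :=
  Multiset.sort (Finset.univ.val.map hA.eigenvalues) (· ≤ ·)

theorem List.Pairwise.getD_one_le_of_two_le_countP {α : Type*} [LinearOrder α] {l : List α}
    (hl : l.Pairwise (· ≤ ·)) {x : α} (d : α) (h : 2 ≤ l.countP (· ≤ x)) :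
    l.getD 1 d ≤ x := by
  match l, hl with
  | [], _ | [_], _ => simpa using h.trans List.countP_le_length
  | a :: b :: t, hl =>
    by_contra! hxb
    have htail : (b :: t).countP (· ≤ x) = 0 := by
      refine List.countP_eq_zero.mpr fun y hy hyx => ?_
      have hby : b ≤ y := by
        rcases List.mem_cons.mp hy with rfl | hy
        · exact le_rfl
        · exact List.rel_of_pairwise_cons hl.of_cons hy
      simp only [List.getD_cons_succ, List.getD_cons_zero] at hxb
      exact absurd (hby.trans (of_decide_eq_true hyx)) (not_le.mpr hxb)
    rw [List.countP_cons, htail] at h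
    split at h <;> omega

theorem OrthonormalBasis.dotProduct_eq_sum {ι n : Type*} [Fintype ι] [Fintype n]
    (b : OrthonormalBasis ι ℝ (EuclideanSpace ℝ n)) (f g : n → ℝ) :
    f ⬝ᵥ g = ∑ i, (⇑(b i) ⬝ᵥ f) * (⇑(b i) ⬝ᵥ g) := by
  have := b.sum_inner_mul_inner (WithLp.toLp 2 f) (WithLp.toLp 2 g)
  simp only [EuclideanSpace.inner_eq_star_dotProduct, star_trivial] at this
  simpa [dotProduct_comm] using this.symm

namespace Matrix.IsHermitian

variable {n : Type*} [Fintype n] [DecidableEq n] {A : Matrix n n ℝ} (hA : A.IsHermitian)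

theorem eigenvectorBasis_dotProduct_mulVec (i : n) (f : n → ℝ) :
    ⇑(hA.eigenvectorBasis i) ⬝ᵥ (A *ᵥ f) =
      hA.eigenvalues i * (⇑(hA.eigenvectorBasis i) ⬝ᵥ f) := by
  rw [dotProduct_mulVec, ← mulVec_transpose, ← conjTranspose_eq_transpose_of_trivial, hA.eq,
    hA.mulVec_eigenvectorBasis, smul_dotProduct, smul_eq_mul]

theorem mul_dotProduct_self_le_dotProduct_mulVec {c : ℝ} {i₀ : n}
    (hc : ∀ i ≠ i₀, c ≤ hA.eigenvalues i) {f : n → ℝ}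
    (hf : ⇑(hA.eigenvectorBasis i₀) ⬝ᵥ f = 0) :
    c * (f ⬝ᵥ f) ≤ f ⬝ᵥ (A *ᵥ f) := by
  rw [hA.eigenvectorBasis.dotProduct_eq_sum, hA.eigenvectorBasis.dotProduct_eq_sum, mul_sum]
  refine sum_le_sum fun i _ => ?_
  rw [hA.eigenvectorBasis_dotProduct_mulVec]
  obtain rfl | hi := eq_or_ne i i₀
  · simp [hf]
  · nlinarith [hc i hi, mul_self_nonneg (⇑(hA.eigenvectorBasis i) ⬝ᵥ f)]

end Matrix.IsHermitian

theorem sortedEigenvalues_getD_one_le {n : Type*} [Fintype n] [DecidableEq n]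
    {A : Matrix n n ℝ} (hA : A.IsHermitian) {i j : n} (hij : i ≠ j)
    (h : hA.eigenvalues i ≤ hA.eigenvalues j) :
    (sortedEigenvalues hA).getD 1 0 ≤ hA.eigenvalues j := by
  refine (Multiset.pairwise_sort _ _).getD_one_le_of_two_le_countP 0 ?_
  rw [← Multiset.coe_countP, Multiset.sort_eq, Multiset.countP_map]
  calc 2 = #{i, j} := (card_pair hij).symm
    _ ≤ #{k | hA.eigenvalues k ≤ hA.eigenvalues j} := card_le_card fun k hk => by
        rcases mem_insert.mp hk with rfl | hk
        · simpa using h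
        · simp [mem_singleton.mp hk]
    _ = _ := rfl

namespace SimpleGraph

theorem Adj.abs_dist_sub_dist_le_one {V : Type*} {G : SimpleGraph V} {u v w : V}
    (hadj : G.Adj v w) : |(G.dist u v : ℝ) - G.dist u w| ≤ 1 := by
  obtain ⟨hvw, hwv⟩ : G.dist u v ≤ G.dist u w + 1 ∧ G.dist u w ≤ G.dist u v + 1 := by
    rcases hadj.diff_dist_adj (u := u) with h | h | h <;> omega
  have hvw' : (G.dist u v : ℝ) ≤ G.dist u w + 1 := mod_cast hvw
  have hwv' : (G.dist u w : ℝ) ≤ G.dist u v + 1 := mod_cast hwv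
  rw [abs_le]
  constructor <;> linarith

variable {V : Type*} [Fintype V] [DecidableEq V] (G : SimpleGraph V) [DecidableRel G.Adj]

theorem exists_lapMatrix_eigenvalues_eq_zero [Nonempty V] (hL : (G.lapMatrix ℝ).IsHermitian) :
    ∃ i, hL.eigenvalues i = 0 := by
  have hdet : (G.lapMatrix ℝ).det = 0 := by
    rw [← exists_mulVec_eq_zero_iff]
    exact ⟨fun _ => 1, Function.ne_iff.mpr ⟨Classical.arbitrary V, one_ne_zero⟩,
      G.lapMatrix_mulVec_const_eq_zero⟩
  rw [hL.det_eq_prod_eigenvalues] at hdet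
  simpa [prod_eq_zero_iff] using hdet

variable {G}

theorem Connected.eigenvectorBasis_dotProduct_eq_zero (hconn : G.Connected)
    (hL : (G.lapMatrix ℝ).IsHermitian) {i : V} (hi : hL.eigenvalues i = 0) {f : V → ℝ}
    (hf : ∑ x, f x = 0) : ⇑(hL.eigenvectorBasis i) ⬝ᵥ f = 0 := by
  have hker : G.lapMatrix ℝ *ᵥ ⇑(hL.eigenvectorBasis i) = 0 := by
    rw [hL.mulVec_eigenvectorBasis, hi, zero_smul]
  obtain ⟨u⟩ := hconn.nonempty
  have hconst : ∀ x, hL.eigenvectorBasis i x = hL.eigenvectorBasis i u := fun x =>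
    (G.lapMatrix_mulVec_eq_zero_iff_forall_reachable).mp hker x u (hconn.preconnected x u)
  simp [dotProduct, hconst, ← mul_sum, hf]

theorem Connected.sortedEigenvalues_getD_one_mul_le (hconn : G.Connected)
    (hL : (G.lapMatrix ℝ).IsHermitian) {f : V → ℝ} (hf : ∑ x, f x = 0) :
    (sortedEigenvalues hL).getD 1 0 * (f ⬝ᵥ f) ≤ f ⬝ᵥ (G.lapMatrix ℝ *ᵥ f) := by
  have := hconn.nonempty
  obtain ⟨i₀, hi₀⟩ := G.exists_lapMatrix_eigenvalues_eq_zero hL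
  refine hL.mul_dotProduct_self_le_dotProduct_mulVec (fun i hi => ?_)
    (hconn.eigenvectorBasis_dotProduct_eq_zero hL hi₀ hf)
  refine sortedEigenvalues_getD_one_le hL hi.symm ?_
  rw [hi₀]
  exact (G.posSemidef_lapMatrix ℝ).eigenvalues_nonneg i

theorem dotProduct_lapMatrix_mulVec_le_card_edgeFinset {f : V → ℝ}
    (hf : ∀ i j, G.Adj i j → |f i - f j| ≤ 1) :
    f ⬝ᵥ (G.lapMatrix ℝ *ᵥ f) ≤ #G.edgeFinset := by
  have hform := G.lapMatrix_toLinearMap₂' (R := ℝ) f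
  rw [toLinearMap₂'_apply'] at hform
  have hterm : ∀ i j,
      (if G.Adj i j then (f i - f j) ^ 2 else 0) ≤ if G.Adj i j then 1 else 0 := by
    intro i j
    split_ifs with hij
    · simpa [sq_abs] using pow_le_one₀ (abs_nonneg _) (hf i j hij) (n := 2)
    · exact le_rfl
  have hdeg : ∑ i, ∑ j, (if G.Adj i j then (1 : ℝ) else 0) = 2 * #G.edgeFinset := by
    simp_rw [← G.degree_eq_sum_if_adj]
    exact_mod_cast G.sum_degrees_eq_twice_card_edges
  rw [hform]
  linarith [sum_le_sum fun i (_ : i ∈ univ) => sum_le_sum fun j (_ : j ∈ univ) => hterm i j]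

end SimpleGraph

theorem sq_sub_div_two_le_sum_sq_sub {ι : Type*} [Fintype ι] (g : ι → ℝ) (c : ℝ) {u v : ι}
    (huv : u ≠ v) : (g u - g v) ^ 2 / 2 ≤ ∑ x, (g x - c) ^ 2 := by
  classical
  have hpair : (g u - c) ^ 2 + (g v - c) ^ 2 ≤ ∑ x, (g x - c) ^ 2 := by
    rw [← sum_pair (f := fun x => (g x - c) ^ 2) huv]
    exact sum_le_sum_of_subset_of_nonneg (subset_univ _) fun x _ _ => sq_nonneg _
  nlinarith [sq_nonneg (g u + g v - 2 * c)]

/-- For a connected finite simple graph `G` with `n ≥ 2` vertices, `m` edges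
and diameter `D`, the second smallest eigenvalue of the Laplacian matrix `L(G)` satisfies
`λ₂(L(G)) ≤ 2 m / D²`. -/
theorem lambda2_lapMatrix_le {V : Type*} [Fintype V] [DecidableEq V]
    (G : SimpleGraph V) [DecidableRel G.Adj]
    (hconn : G.Connected) (hn : 2 ≤ Fintype.card V)
    (hL : (G.lapMatrix ℝ).IsHermitian) :
    (sortedEigenvalues hL).getD 1 0 ≤
      2 * (G.edgeFinset.card : ℝ) / (G.diam : ℝ) ^ 2 := by
  have : Nontrivial V := Fintype.one_lt_card_iff_nontrivial.mp hn
  have hD : 0 < G.diam := Nat.pos_of_ne_zero (G.connected_iff_diam_ne_zero.mp hconn)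
  obtain ⟨u, v, huv⟩ := G.exists_dist_eq_diam
  have hne : u ≠ v := by
    rintro rfl
    simp only [SimpleGraph.dist_self] at huv
    omega
  set d : V → ℝ := fun x => G.dist u x
  set f : V → ℝ := fun x => d x - (∑ y, d y) / Fintype.card V
  have hf : ∑ x, f x = 0 := by
    simp only [f, sum_sub_distrib, sum_const, card_univ, nsmul_eq_mul]
    field_simp
    ring
  have hnorm : (G.diam : ℝ) ^ 2 / 2 ≤ f ⬝ᵥ f := by
    simpa [d, huv, dotProduct, sq] using sq_sub_div_two_le_sum_sq_sub d _ hne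
  have hquad : f ⬝ᵥ (G.lapMatrix ℝ *ᵥ f) ≤ #G.edgeFinset :=
    SimpleGraph.dotProduct_lapMatrix_mulVec_le_card_edgeFinset fun i j hij => by
      simpa [f] using hij.abs_dist_sub_dist_le_one
  have hrayleigh := hconn.sortedEigenvalues_getD_one_mul_le hL hf
  set ev₂ := (sortedEigenvalues hL).getD 1 0
  rw [le_div_iff₀ (by positivity)]
  rcases le_or_gt ev₂ 0 with hneg | hpos
  · exact (mul_nonpos_of_nonpos_of_nonneg hneg (by positivity)).trans (by positivity)
  · calc ev₂ * (G.diam : ℝ) ^ 2 = 2 * (ev₂ * ((G.diam : ℝ) ^ 2 / 2)) := by ring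
      _ ≤ 2 * (ev₂ * (f ⬝ᵥ f)) := by gcongr
      _ ≤ 2 * #G.edgeFinset := by linarith
end

section
/- Let d = 2 or d = 3, and let (G, x) be a framework with vertex set V of size n ≥ d + 1 and positions x : V → ℝ^d. If (G, x) is infinitesimally rigid, then for every vertex i ∈ V the set of points {x_j : j ∈ N*_i}, where N*_i = {i} ∪ {j : {i,j} ∈ E(G)} is the inclusive neighborhood of i, is in general position, i.e. its affine span is all of ℝ^d (the points do not lie in a proper affine subspace of ℝ^d). -/
open Matrix

/-- `u` is an infinitesimal motion of the framework `(G, x)` in `ℝ^d`: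
`⟨x i - x j, u i - u j⟩ = 0` for every edge `{i, j}` of `G`. -/
def IsInfinitesimalMotion {V : Type*} {d : ℕ} (G : SimpleGraph V)
    (x u : V → Fin d → ℝ) : Prop :=
  ∀ i j : V, G.Adj i j → (x i - x j) ⬝ᵥ (u i - u j) = 0

/-- `u` is a trivial motion of the points `x`: `u i = A (x i) + b` for a skew-symmetric
`d × d` real matrix `A` and a vector `b ∈ ℝ^d`. -/
def IsTrivialMotion {V : Type*} {d : ℕ} (x u : V → Fin d → ℝ) : Prop :=
  ∃ (A : Matrix (Fin d) (Fin d) ℝ) (b : Fin d → ℝ),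
    Aᵀ = -A ∧ ∀ i : V, u i = A.mulVec (x i) + b

/-- The framework `(G, x)` is infinitesimally rigid: every infinitesimal motion is trivial. -/
def IsInfRigid {V : Type*} {d : ℕ} (G : SimpleGraph V) (x : V → Fin d → ℝ) : Prop :=
  ∀ u : V → Fin d → ℝ, IsInfinitesimalMotion G x u → IsTrivialMotion x u

open Module FiniteDimensional

lemma exists_dot_orthogonal {d : ℕ} (p : Submodule ℝ (Fin d → ℝ)) (hp : p ≠ ⊤) :
    ∃ n : Fin d → ℝ, n ≠ 0 ∧ ∀ w ∈ p, w ⬝ᵥ n = 0 := by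
  obtain ⟨f, hf0, hf⟩ := p.exists_dual_map_eq_bot_of_lt_top (lt_top_iff_ne_top.2 hp) inferInstance
  refine ⟨fun k => f (fun j => if k = j then 1 else 0), ?_, ?_⟩
  · intro h
    apply hf0
    refine LinearMap.ext fun w => ?_
    rw [LinearMap.pi_apply_eq_sum_univ f w]
    simp only [LinearMap.zero_apply]
    refine Finset.sum_eq_zero fun k _ => ?_
    have := congrFun h k
    simp only [Pi.zero_apply] at this
    rw [this, smul_eq_mul, mul_zero]
  · intro w hw
    have hfw : f w = 0 := by
      have : f w ∈ p.map f := Submodule.mem_map_of_mem hw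
      rw [hf] at this
      simpa using this
    rw [LinearMap.pi_apply_eq_sum_univ f w] at hfw
    simp only [smul_eq_mul] at hfw
    rw [dotProduct]
    exact hfw

-- skew identity
lemma skew_dot {d : ℕ} {A : Matrix (Fin d) (Fin d) ℝ} (hA : Aᵀ = -A)
    (v w : Fin d → ℝ) : (A *ᵥ v) ⬝ᵥ w = -(v ⬝ᵥ (A *ᵥ w)) := by
  calc (A *ᵥ v) ⬝ᵥ w = (v ᵥ* Aᵀ) ⬝ᵥ w := by rw [vecMul_transpose]
    _ = (v ᵥ* (-A)) ⬝ᵥ w := by rw [hA]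
    _ = -((v ᵥ* A) ⬝ᵥ w) := by rw [Matrix.vecMul_neg, neg_dotProduct]
    _ = -(v ⬝ᵥ (A *ᵥ w)) := by rw [← dotProduct_mulVec]

-- skew nonzero has kernel of codim ≥ 2
lemma skew_ker_le {d : ℕ} {A : Matrix (Fin d) (Fin d) ℝ} (hA : Aᵀ = -A) (hA0 : A ≠ 0) :
    finrank ℝ (LinearMap.ker A.mulVecLin) + 2 ≤ d := by
  obtain ⟨v, hv⟩ : ∃ v, A *ᵥ v ≠ 0 := by
    by_contra h
    push_neg at h
    apply hA0
    ext k l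
    have := congrFun (h (Pi.single l 1)) k
    simpa [Matrix.mulVec_single] using this
  set w1 := A *ᵥ v with hw1def
  set w2 := A *ᵥ w1 with hw2def
  have hw11 : w1 ⬝ᵥ w1 ≠ 0 := fun h => hv (dotProduct_self_eq_zero.mp h)
  have hw2 : w2 ≠ 0 := by
    intro h
    apply hw11
    have : w2 ⬝ᵥ v = -(w1 ⬝ᵥ w1) := skew_dot hA w1 v
    rw [h] at this
    simp only [zero_dotProduct] at this
    linarith [this]
  have h21 : w2 ⬝ᵥ w1 = 0 := by
    have := skew_dot hA w1 w1
    have h2 : w2 ⬝ᵥ w1 = -(w1 ⬝ᵥ w2) := skew_dot hA w1 w1 ▸ this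
    -- w2 ⬝ᵥ w1 = (A *ᵥ w1) ⬝ᵥ w1 = -(w1 ⬝ᵥ (A *ᵥ w1)) = -(w1 ⬝ᵥ w2)
    have h3 : (A *ᵥ w1) ⬝ᵥ w1 = -(w1 ⬝ᵥ (A *ᵥ w1)) := skew_dot hA w1 w1
    have h4 : w1 ⬝ᵥ (A *ᵥ w1) = (A *ᵥ w1) ⬝ᵥ w1 := dotProduct_comm _ _
    rw [h4] at h3
    have : (A *ᵥ w1) ⬝ᵥ w1 = 0 := by linarith
    exact this
  have hindep : LinearIndependent ℝ ![w1, w2] := by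
    rw [LinearIndependent.pair_iff]
    intro a b hab
    have hdot := congrArg (fun z => z ⬝ᵥ w1) hab
    simp only [add_dotProduct, smul_dotProduct, zero_dotProduct, smul_eq_mul] at hdot
    rw [h21] at hdot
    have ha : a = 0 := by
      have : a * (w1 ⬝ᵥ w1) = 0 := by linarith
      exact (mul_eq_zero.mp this).resolve_right hw11
    subst ha
    simp only [zero_smul, zero_add] at hab
    have hb : b = 0 := by
      by_contra hb
      exact hw2 (by simpa [smul_eq_zero, hb] using hab)
    exact ⟨rfl, hb⟩
  have hrange : 2 ≤ finrank ℝ (LinearMap.range A.mulVecLin) := by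
    have hsub : Submodule.span ℝ (Set.range ![w1, w2]) ≤ LinearMap.range A.mulVecLin := by
      rw [Submodule.span_le]
      rintro z ⟨k, rfl⟩
      fin_cases k
      · exact ⟨v, by simp [hw1def]⟩
      · exact ⟨w1, by simp [hw2def]⟩
    have := finrank_span_eq_card hindep
    calc (2 : ℕ) = finrank ℝ (Submodule.span ℝ (Set.range ![w1, w2])) := by
          rw [this]; simp
      _ ≤ finrank ℝ (LinearMap.range A.mulVecLin) := Submodule.finrank_mono hsub
  have hrn := LinearMap.finrank_range_add_finrank_ker A.mulVecLin
  rw [Module.finrank_pi, Fintype.card_fin] at hrn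
  omega

/-- For `d = 2` or `d = 3`, if a framework `(G, x)` in `ℝ^d` with at least
`d + 1` vertices is infinitesimally rigid, then for every vertex `i` the positions of the
inclusive neighborhood `N*_i = {i} ∪ N_i` are in general position, i.e. affinely span `ℝ^d`. -/
theorem inclusiveNeighborhood_generalPosition_of_infRigid
    {V : Type*} [Fintype V] {d : ℕ} (hd : d = 2 ∨ d = 3)
    (G : SimpleGraph V) (x : V → Fin d → ℝ)
    (hn : d + 1 ≤ Fintype.card V)
    (hrigid : IsInfRigid G x) (i : V) :
    affineSpan ℝ (x '' ({i} ∪ {j : V | G.Adj i j})) = ⊤ := by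
  classical
  by_contra hspan
  set N : Set V := {i} ∪ {j : V | G.Adj i j} with hN
  have hiN : x i ∈ x '' N := ⟨i, Or.inl rfl, rfl⟩
  have hd2 : 2 ≤ d := by omega
  -- a nonzero vector orthogonal to the directions within the neighborhood
  have hdir : vectorSpan ℝ (x '' N) ≠ ⊤ := by
    intro h
    apply hspan
    have hne : ((affineSpan ℝ (x '' N) : AffineSubspace ℝ (Fin d → ℝ)) : Set (Fin d → ℝ)).Nonempty :=
      ⟨x i, subset_affineSpan ℝ _ hiN⟩
    rw [← AffineSubspace.direction_eq_top_iff_of_nonempty hne, direction_affineSpan]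
    exact h
  obtain ⟨n, hn0, hnperp⟩ := exists_dot_orthogonal _ hdir
  have hperpN : ∀ j ∈ N, (x i - x j) ⬝ᵥ n = 0 := by
    intro j hj
    have hmem : x i - x j ∈ vectorSpan ℝ (x '' N) := by
      have := vsub_mem_vectorSpan ℝ hiN (⟨j, hj, rfl⟩ : x j ∈ x '' N)
      simpa [vsub_eq_sub] using this
    exact hnperp _ hmem
  -- the motion moving only vertex i
  set u : V → Fin d → ℝ := fun j => if j = i then n else 0 with hu
  have humotion : IsInfinitesimalMotion G x u := by
    intro j k hadj
    have hjk : j ≠ k := hadj.ne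
    by_cases hj : j = i
    · subst hj
      have hk : k ≠ j := fun h => hjk h.symm
      have h1 : u j - u k = n := by simp [hu, hk]
      rw [h1]
      exact hperpN k (Or.inr hadj)
    · by_cases hk : k = i
      · subst hk
        have h1 : u j - u k = -n := by simp [hu, hj]
        rw [h1, dotProduct_neg]
        have h2 : (x k - x j) ⬝ᵥ n = 0 := hperpN j (Or.inr hadj.symm)
        have h3 : (x j - x k) ⬝ᵥ n = -((x k - x j) ⬝ᵥ n) := by
          rw [← neg_dotProduct, neg_sub]
        rw [h3, h2, neg_zero, neg_zero]
      · have h1 : u j - u k = 0 := by simp [hu, hj, hk]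
        rw [h1, dotProduct_zero]
  -- rigidity: this motion is trivial
  obtain ⟨A, b, hskew, hAb⟩ := hrigid u humotion
  -- all vertices other than i are zeros of y ↦ A y + b
  have hzero : ∀ j : V, j ≠ i → A *ᵥ x j + b = 0 := by
    intro j hj
    have := hAb j
    simp only [hu, if_neg hj] at this
    exact this.symm
  have hxin : A *ᵥ x i + b = n := by
    have := hAb i
    simp only [hu, if_pos rfl] at this
    exact this.symm
  -- fix a vertex j0 ≠ i
  obtain ⟨j0, hj0⟩ : ∃ j0 : V, j0 ≠ i :=
    Fintype.exists_ne_of_one_lt_card (by omega) i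
  -- A ≠ 0
  have hA0 : A ≠ 0 := by
    intro h
    subst h
    have hb : b = 0 := by simpa using hzero j0 hj0
    apply hn0
    rw [← hxin, hb]
    simp
  have hker := skew_ker_le hskew hA0
  set K : Submodule ℝ (Fin d → ℝ) := LinearMap.ker A.mulVecLin with hK
  have hmemK : ∀ j : V, j ≠ i → x j - x j0 ∈ K := by
    intro j hj
    rw [hK, LinearMap.mem_ker, Matrix.mulVecLin_apply, Matrix.mulVec_sub]
    have h1 := hzero j hj
    have h2 := hzero j0 hj0
    have : (A *ᵥ x j + b) - (A *ᵥ x j0 + b) = 0 := by rw [h1, h2, sub_zero]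
    simpa using this
  -- all difference vectors lie in a proper subspace U
  set U : Submodule ℝ (Fin d → ℝ) := K ⊔ (ℝ ∙ (x i - x j0)) with hU
  have htermU : ∀ j : V, x j - x j0 ∈ U := by
    intro j
    by_cases hj : j = i
    · subst hj
      exact Submodule.mem_sup_right (Submodule.mem_span_singleton_self _)
    · exact Submodule.mem_sup_left (hmemK j hj)
  have hdiffU : ∀ j k : V, x j - x k ∈ U := by
    intro j k
    have : x j - x k = (x j - x j0) - (x k - x j0) := by ring_nf
    rw [this]
    exact Submodule.sub_mem _ (htermU j) (htermU k)
  have hUne : U ≠ ⊤ := by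
    intro h
    have h1 : finrank ℝ U ≤ finrank ℝ K + finrank ℝ (ℝ ∙ (x i - x j0)) :=
      Submodule.finrank_add_le_finrank_add_finrank _ _
    have h2 : finrank ℝ (ℝ ∙ (x i - x j0)) ≤ 1 := by
      by_cases hw : x i - x j0 = 0
      · rw [hw, Submodule.span_zero_singleton]
        rw [finrank_bot]
        omega
      · rw [finrank_span_singleton hw]
    have h3 : finrank ℝ U = d := by
      rw [h, finrank_top, Module.finrank_pi, Fintype.card_fin]
    omega
  obtain ⟨m, hm0, hmperp⟩ := exists_dot_orthogonal _ hUne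
  have hM : m ⬝ᵥ m ≠ 0 := fun h => hm0 (dotProduct_self_eq_zero.mp h)
  -- the linear map encoding which coefficient families come from trivial motions
  set T := {j : V // j ≠ i} with hT
  have hcardT : Fintype.card T = Fintype.card V - 1 := by
    have : Fintype.card {j : V // j ≠ i} = Fintype.card V - 1 := by
      simp [Fintype.card_subtype_compl]
    exact this
  set Ψ : (Module.Dual ℝ K) × ℝ →ₗ[ℝ] (T → ℝ) :=
    { toFun := fun p j => p.1 ⟨x j.1 - x j0, hmemK j.1 j.2⟩ + p.2
      map_add' := by
        intro p q
        funext j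
        simp only [LinearMap.add_apply, Prod.fst_add, Prod.snd_add, Pi.add_apply]
        ring
      map_smul' := by
        intro a p
        funext j
        simp only [Prod.smul_fst, Prod.smul_snd, LinearMap.smul_apply, RingHom.id_apply,
          Pi.smul_apply, smul_eq_mul]
        ring } with hΨ
  have hΨne : LinearMap.range Ψ ≠ ⊤ := by
    intro h
    have h1 : finrank ℝ (LinearMap.range Ψ) ≤ finrank ℝ ((Module.Dual ℝ K) × ℝ) :=
      LinearMap.finrank_range_le Ψ
    have h2 : finrank ℝ ((Module.Dual ℝ K) × ℝ) = finrank ℝ K + 1 := by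
      rw [Module.finrank_prod, Subspace.dual_finrank_eq, Module.finrank_self]
    have h3 : finrank ℝ (LinearMap.range Ψ) = Fintype.card V - 1 := by
      rw [h, finrank_top, Module.finrank_pi, hcardT]
    omega
  obtain ⟨c, hc⟩ : ∃ c : T → ℝ, c ∉ LinearMap.range Ψ := by
    by_contra h
    push_neg at h
    exact hΨne (Submodule.eq_top_iff'.mpr h)
  -- the coefficient family defines a motion
  set c' : V → ℝ := fun j => if h : j = i then 0 else c ⟨j, h⟩ with hc'
  set v : V → Fin d → ℝ := fun j => c' j • m with hv
  have hvmotion : IsInfinitesimalMotion G x v := by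
    intro j k _
    have h1 : v j - v k = (c' j - c' k) • m := by rw [hv, sub_smul]
    rw [h1, dotProduct_smul, hmperp _ (hdiffU j k), smul_zero]
  obtain ⟨A', b', _, hA'b'⟩ := hrigid v hvmotion
  -- it is then realized by Ψ, contradiction
  apply hc
  set dotm : (Fin d → ℝ) →ₗ[ℝ] ℝ :=
    { toFun := fun w => w ⬝ᵥ m
      map_add' := fun a b => add_dotProduct a b m
      map_smul' := fun r a => smul_dotProduct r a m } with hdotm
  set ℓ : Module.Dual ℝ K := (m ⬝ᵥ m)⁻¹ • (dotm ∘ₗ A'.mulVecLin ∘ₗ K.subtype) with hℓ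
  set β : ℝ := (m ⬝ᵥ m)⁻¹ * ((A' *ᵥ x j0 + b') ⬝ᵥ m) with hβ
  refine ⟨(ℓ, β), ?_⟩
  funext j
  have hvj : A' *ᵥ x j.1 + b' = c' j.1 • m := (hA'b' j.1).symm
  have hcalc : (A' *ᵥ (x j.1 - x j0)) ⬝ᵥ m + (A' *ᵥ x j0 + b') ⬝ᵥ m
      = (A' *ᵥ x j.1 + b') ⬝ᵥ m := by
    rw [Matrix.mulVec_sub]
    simp only [sub_dotProduct, add_dotProduct]
    ring
  have hcj : c' j.1 = c j := by
    have h1 : c' j.1 = if h : (j : V) = i then 0 else c ⟨j, h⟩ := rfl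
    rw [h1, dif_neg j.2]
  calc Ψ (ℓ, β) j
      = (m ⬝ᵥ m)⁻¹ * ((A' *ᵥ (x j.1 - x j0)) ⬝ᵥ m) + β := by
        simp [hΨ, hℓ, hdotm, smul_eq_mul]
    _ = (m ⬝ᵥ m)⁻¹ * ((A' *ᵥ x j.1 + b') ⬝ᵥ m) := by
        rw [hβ, ← hcalc]; ring
    _ = (m ⬝ᵥ m)⁻¹ * (c' j.1 * (m ⬝ᵥ m)) := by
        rw [hvj, smul_dotProduct, smul_eq_mul]
    _ = c j := by
        rw [hcj]
        field_simp
end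

section
/- Let d = 2 or d = 3, and let (G, x) be a framework whose graph G on vertex set V, |V| = n ≥ d + 1, is connected, with positions x : V → ℝ^d. Then (G, x) is infinitesimally rigid if and only if there exists a family of extents h : V → ℕ with h_i ≥ 1 for all i, such that for every i ∈ V the subframework F_i = (G_i, x restricted to V_i) is infinitesimally rigid, where V_i = {j ∈ V : dist_G(i,j) ≤ h_i} and G_i is the subgraph of G induced on V_i. -/
open Matrix

section AuxAlgebra

lemma skew_sub' {d : ℕ} {A B : Matrix (Fin d) (Fin d) ℝ} (hA : Aᵀ = -A) (hB : Bᵀ = -B) :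
    (A - B)ᵀ = -(A - B) := by
  rw [Matrix.transpose_sub, hA, hB]; abel

lemma matrix_eq_zero_of_mulVec {d : ℕ} {M : Matrix (Fin d) (Fin d) ℝ}
    (h : ∀ w, M.mulVec w = 0) : M = 0 := by
  ext i j
  have := congrFun (h (Pi.single j 1)) i
  rw [Matrix.mulVec_single] at this
  simpa using this

lemma skew2_entries {A : Matrix (Fin 2) (Fin 2) ℝ} (h : Aᵀ = -A) :
    A 0 0 = 0 ∧ A 1 1 = 0 ∧ A 1 0 = -A 0 1 := by
  have h00 := congrFun (congrFun h 0) 0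
  have h11 := congrFun (congrFun h 1) 1
  have h01 := congrFun (congrFun h 0) 1
  simp [Matrix.transpose_apply, Matrix.neg_apply] at h00 h11 h01
  refine ⟨by linarith, by linarith, by linarith⟩

lemma skew2_eq_zero {A : Matrix (Fin 2) (Fin 2) ℝ} (h : Aᵀ = -A) {w : Fin 2 → ℝ}
    (hw : w ≠ 0) (h0 : A.mulVec w = 0) : A = 0 := by
  obtain ⟨h00, h11, h10⟩ := skew2_entries h
  have e0 := congrFun h0 0
  have e1 := congrFun h0 1
  simp [Matrix.mulVec, dotProduct, Fin.sum_univ_two, h00, h11, h10] at e0 e1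
  have hc : A 0 1 = 0 := by
    by_contra hne
    have hw1 : w 1 = 0 := e0.resolve_left hne
    have hw0 : w 0 = 0 := by
      rcases e1 with h' | h'
      · exact absurd h' hne
      · exact h'
    apply hw
    funext i; fin_cases i <;> simpa
  ext i j
  fin_cases i <;> fin_cases j <;> simp [h00, h11, h10, hc]

def cross3 (a b : Fin 3 → ℝ) : Fin 3 → ℝ :=
  ![a 1 * b 2 - a 2 * b 1, a 2 * b 0 - a 0 * b 2, a 0 * b 1 - a 1 * b 0]

lemma cross3_smul_left (s : ℝ) (u w : Fin 3 → ℝ) : cross3 (s • u) w = s • cross3 u w := by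
  funext i; fin_cases i <;> simp [cross3] <;> ring

lemma cross3_smul_right (s : ℝ) (u w : Fin 3 → ℝ) : cross3 u (s • w) = s • cross3 u w := by
  funext i; fin_cases i <;> simp [cross3] <;> ring

lemma cross3_zero_left (w : Fin 3 → ℝ) : cross3 0 w = 0 := by
  funext i; fin_cases i <;> simp [cross3]

lemma cross3_swap_zero {a b : Fin 3 → ℝ} (h : cross3 a b = 0) : cross3 b a = 0 := by
  funext i
  have h0 := congrFun h 0
  have h1 := congrFun h 1
  have h2 := congrFun h 2
  simp [cross3] at h0 h1 h2 ⊢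
  fin_cases i <;> simp [cross3] <;> linarith

lemma skew3_exists_omega {A : Matrix (Fin 3) (Fin 3) ℝ} (h : Aᵀ = -A) :
    ∃ ω : Fin 3 → ℝ, ∀ w, A.mulVec w = cross3 ω w := by
  have h00 := congrFun (congrFun h 0) 0
  have h11 := congrFun (congrFun h 1) 1
  have h22 := congrFun (congrFun h 2) 2
  have h01 := congrFun (congrFun h 0) 1
  have h02 := congrFun (congrFun h 0) 2
  have h12 := congrFun (congrFun h 1) 2
  simp [Matrix.transpose_apply, Matrix.neg_apply] at h00 h11 h22 h01 h02 h12
  have z00 : A 0 0 = 0 := by linarith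
  have z11 : A 1 1 = 0 := by linarith
  have z22 : A 2 2 = 0 := by linarith
  refine ⟨![A 2 1, A 0 2, A 1 0], fun w => ?_⟩
  funext i
  fin_cases i
  · simp [Matrix.mulVec, dotProduct, Fin.sum_univ_three, cross3]
    linear_combination w 0 * z00 + w 1 * h01
  · simp [Matrix.mulVec, dotProduct, Fin.sum_univ_three, cross3]
    linear_combination w 1 * z11 + w 2 * h12
  · simp [Matrix.mulVec, dotProduct, Fin.sum_univ_three, cross3]
    linear_combination w 0 * h02 + w 2 * z22

lemma cross3_eq_zero_parallel {ω v : Fin 3 → ℝ} (h : cross3 ω v = 0) (hv : v ≠ 0) :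
    ∃ t : ℝ, ω = t • v := by
  have h0 := congrFun h 0
  have h1 := congrFun h 1
  have h2 := congrFun h 2
  simp [cross3] at h0 h1 h2
  rcases Function.ne_iff.1 hv with ⟨i, hi⟩
  fin_cases i
  · have hv0 : v 0 ≠ 0 := by simpa using hi
    refine ⟨ω 0 / v 0, ?_⟩
    have e0 : ω 0 = ω 0 / v 0 * v 0 := by field_simp
    have e1 : ω 1 = ω 0 / v 0 * v 1 := by rw [div_mul_eq_mul_div, eq_div_iff hv0]; linarith
    have e2 : ω 2 = ω 0 / v 0 * v 2 := by rw [div_mul_eq_mul_div, eq_div_iff hv0]; linarith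
    funext j; fin_cases j
    exacts [e0, e1, e2]
  · have hv1 : v 1 ≠ 0 := by simpa using hi
    refine ⟨ω 1 / v 1, ?_⟩
    have e0 : ω 0 = ω 1 / v 1 * v 0 := by rw [div_mul_eq_mul_div, eq_div_iff hv1]; linarith
    have e1 : ω 1 = ω 1 / v 1 * v 1 := by field_simp
    have e2 : ω 2 = ω 1 / v 1 * v 2 := by rw [div_mul_eq_mul_div, eq_div_iff hv1]; linarith
    funext j; fin_cases j
    exacts [e0, e1, e2]
  · have hv2 : v 2 ≠ 0 := by simpa using hi
    refine ⟨ω 2 / v 2, ?_⟩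
    have e0 : ω 0 = ω 2 / v 2 * v 0 := by rw [div_mul_eq_mul_div, eq_div_iff hv2]; linarith
    have e1 : ω 1 = ω 2 / v 2 * v 1 := by rw [div_mul_eq_mul_div, eq_div_iff hv2]; linarith
    have e2 : ω 2 = ω 2 / v 2 * v 2 := by field_simp
    funext j; fin_cases j
    exacts [e0, e1, e2]

lemma exists_perp_not_smul (e w0 : Fin 3 → ℝ) :
    ∃ δ : Fin 3 → ℝ, e ⬝ᵥ δ = 0 ∧ ∀ t : ℝ, δ ≠ t • w0 := by
  by_contra hcon
  push_neg at hcon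
  let f : (Fin 3 → ℝ) →ₗ[ℝ] ℝ :=
    { toFun := fun δ => e ⬝ᵥ δ
      map_add' := fun u v => dotProduct_add e u v
      map_smul' := fun c u => by simp [dotProduct_smul] }
  have hker : LinearMap.ker f ≤ Submodule.span ℝ {w0} := by
    intro δ hδ
    obtain ⟨t, ht⟩ := hcon δ hδ
    rw [ht]
    exact Submodule.smul_mem _ t (Submodule.mem_span_singleton_self w0)
  have h1 : Module.finrank ℝ (LinearMap.ker f) ≤ 1 := by
    refine le_trans (Submodule.finrank_mono hker) ?_
    refine le_trans (finrank_span_le_card _) ?_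
    simp
  have h2 : Module.finrank ℝ (LinearMap.range f) + Module.finrank ℝ (LinearMap.ker f) = 3 := by
    rw [LinearMap.finrank_range_add_finrank_ker f, Module.finrank_fin_fun]
  have h3 : Module.finrank ℝ (LinearMap.range f) ≤ 1 := by
    refine le_trans (Submodule.finrank_le _) ?_
    simp [Module.finrank_self]
  omega

end AuxAlgebra

/-- The subframework of `(G, x)` induced on the vertex subset `S` (with the edges of `G`
joining vertices of `S`) is infinitesimally rigid: every velocity assignment satisfying the
infinitesimal constraints on the edges inside `S` agrees on `S` with a trivial motion. -/
def IsInfRigidOn {V : Type*} {d : ℕ} (G : SimpleGraph V) (x : V → Fin d → ℝ)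
    (S : Set V) : Prop :=
  ∀ u : V → Fin d → ℝ,
    (∀ i j : V, i ∈ S → j ∈ S → G.Adj i j → (x i - x j) ⬝ᵥ (u i - u j) = 0) →
    ∃ (A : Matrix (Fin d) (Fin d) ℝ) (b : Fin d → ℝ),
      Aᵀ = -A ∧ ∀ i ∈ S, u i = A.mulVec (x i) + b

section AuxFramework
variable {V : Type*} {d : ℕ} {G : SimpleGraph V} {x : V → Fin d → ℝ}

lemma adj_dist_le_one {i j : V} (h : G.Adj i j) : G.dist i j ≤ 1 := by
  have := SimpleGraph.dist_le h.toWalk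
  simpa using this

/-- the "pin" lemma: a delta-motion at a single vertex of a rigid set -/
lemma delta_motion [Fintype V] {S : Set V} (hS : IsInfRigidOn G x S) {i' : V} (hi' : i' ∈ S)
    (δ : Fin d → ℝ) (hperp : ∀ m ∈ S, G.Adj i' m → (x i' - x m) ⬝ᵥ δ = 0) :
    ∃ (A : Matrix (Fin d) (Fin d) ℝ) (b : Fin d → ℝ), Aᵀ = -A ∧
      (∀ m ∈ S, m ≠ i' → A.mulVec (x m) + b = 0) ∧ A.mulVec (x i') + b = δ := by
  classical
  have hmot : ∀ k l : V, k ∈ S → l ∈ S → G.Adj k l →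
      (x k - x l) ⬝ᵥ ((fun m => if m = i' then δ else 0) k - (fun m => if m = i' then δ else 0) l) = 0 := by
    intro k l hk hl hadj
    by_cases hki : k = i'
    · subst hki
      have hlne : l ≠ k := (hadj.symm.ne)
      simp only [if_pos rfl, if_neg hlne]
      rw [sub_zero]
      exact hperp l hl hadj
    · by_cases hli : l = i'
      · subst hli
        have hp : (x l - x k) ⬝ᵥ δ = 0 := hperp k hk hadj.symm
        have hp2 : (x k - x l) ⬝ᵥ δ = 0 := by
          rw [← neg_sub (x l) (x k), neg_dotProduct, hp, neg_zero]
        simp [hki, hp2, hp]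
      · simp only [if_neg hki, if_neg hli, sub_zero, dotProduct_zero]
  obtain ⟨A, b, hskew, hall⟩ := hS (fun m => if m = i' then δ else 0) hmot
  refine ⟨A, b, hskew, fun m hm hne => ?_, ?_⟩
  · have := hall m hm
    simp only [if_neg hne] at this
    exact this.symm
  · have := hall i' hi'
    simp only [if_pos rfl] at this
    exact this.symm

/-- trichotomy of a finite point set -/
lemma trichotomy (x' : V → Fin d → ℝ) (Y : Set V) (j : V) (hj : j ∈ Y) :
    (∀ k ∈ Y, x' k = x' j) ∨
    (∃ q ∈ Y, x' q ≠ x' j ∧ ∀ k ∈ Y, ∃ t : ℝ, x' k = x' j + t • (x' q - x' j)) ∨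
    (∃ a ∈ Y, ∃ b ∈ Y, ∃ c ∈ Y, x' b - x' a ≠ 0 ∧ ∀ t : ℝ, x' c - x' a ≠ t • (x' b - x' a)) := by
  classical
  by_cases h1 : ∀ k ∈ Y, x' k = x' j
  · exact Or.inl h1
  push_neg at h1
  obtain ⟨q, hq, hqne⟩ := h1
  by_cases h2 : ∀ k ∈ Y, ∃ t : ℝ, x' k = x' j + t • (x' q - x' j)
  · exact Or.inr (Or.inl ⟨q, hq, hqne, h2⟩)
  push_neg at h2
  obtain ⟨c, hc, hcne⟩ := h2
  refine Or.inr (Or.inr ⟨j, hj, q, hq, c, hc, sub_ne_zero_of_ne hqne, fun t ht => ?_⟩)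
  exact hcne t (by rw [← ht]; abel)

end AuxFramework
/-- a set of points containing a noncollinear triple -/
abbrev FatAt {V : Type*} (x : V → Fin 3 → ℝ) (S : Set V) : Prop :=
  ∃ a ∈ S, ∃ a' ∈ S, ∃ a'' ∈ S,
    x a' - x a ≠ 0 ∧ ∀ t : ℝ, x a'' - x a ≠ t • (x a' - x a)

section AuxThree
variable {V : Type*} [Fintype V] {G : SimpleGraph V} {x : V → Fin 3 → ℝ}

/-- a skew-affine map vanishing on a noncollinear triple vanishes identically -/
lemma skew_affine_kill {N : Matrix (Fin 3) (Fin 3) ℝ} {c0 : Fin 3 → ℝ} (hsk : Nᵀ = -N)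
    {a a' a'' : Fin 3 → ℝ} (hne : a' - a ≠ 0) (hnc : ∀ t : ℝ, a'' - a ≠ t • (a' - a))
    (ha : N.mulVec a + c0 = 0) (ha' : N.mulVec a' + c0 = 0) (ha'' : N.mulVec a'' + c0 = 0) :
    N = 0 ∧ c0 = 0 := by
  obtain ⟨ω, hω⟩ := skew3_exists_omega hsk
  have e1 : cross3 ω (a' - a) = 0 := by
    rw [← hω, Matrix.mulVec_sub, add_right_cancel (ha'.trans ha.symm), sub_self]
  have e2 : cross3 ω (a'' - a) = 0 := by
    rw [← hω, Matrix.mulVec_sub, add_right_cancel (ha''.trans ha.symm), sub_self]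
  obtain ⟨s, hs⟩ := cross3_eq_zero_parallel e1 hne
  have hs0 : s = 0 := by
    by_contra hs0
    have e2' : cross3 (a'' - a) (a' - a) = 0 := by
      apply cross3_swap_zero
      have hz : s • cross3 (a' - a) (a'' - a) = 0 := by
        rw [← cross3_smul_left, ← hs]; exact e2
      rcases smul_eq_zero.mp hz with h' | h'
      · exact absurd h' hs0
      · exact h'
    obtain ⟨t, ht⟩ := cross3_eq_zero_parallel e2' hne
    exact hnc t ht
  rw [hs0, zero_smul] at hs
  have hN : N = 0 := by
    apply matrix_eq_zero_of_mulVec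
    intro w
    rw [hω, hs, cross3_zero_left]
  refine ⟨hN, ?_⟩
  rw [hN, Matrix.zero_mulVec, zero_add] at ha
  exact ha

/-- a rigid set with at least three vertices contains a noncollinear triple -/
lemma rigid_fat {S : Set V} (hS : IsInfRigidOn G x S) {a1 a2 a3 : V}
    (h1 : a1 ∈ S) (h2 : a2 ∈ S) (h3 : a3 ∈ S)
    (h12 : a1 ≠ a2) (h13 : a1 ≠ a3) (h23 : a2 ≠ a3) : FatAt x S := by
  rcases trichotomy x S a1 h1 with htri | ⟨q, hqm, hqne, hline⟩ | htri3
  · -- all points of S coincide: contradiction with rigidity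
    exfalso
    have hperp : ∀ m ∈ S, G.Adj a1 m → (x a1 - x m) ⬝ᵥ (Pi.single (0:Fin 3) (1:ℝ)) = 0 := by
      intro m hm _
      rw [htri a1 h1, ← htri m hm, sub_self, zero_dotProduct]
    obtain ⟨A, b, hsk, hz, hδ⟩ := delta_motion hS h1 (Pi.single (0:Fin 3) (1:ℝ)) hperp
    have h0 := hz a2 h2 h12.symm
    rw [htri a2 h2, ← htri a1 h1] at h0
    have := congrFun (hδ.symm.trans h0) 0
    simp at this
  · -- all points of S on a line through x a1: contradiction with rigidity
    exfalso
    have hekill : ∀ m ∈ S, ∀ u1 ∈ S, ∀ u2 ∈ S,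
        u1 ≠ m → u2 ≠ m → x u1 ≠ x u2 → False := by
      intro m hm u1 hu1 u2 hu2 hne1 hne2 hxne
      obtain ⟨δ, hδperp, hδn⟩ := exists_perp_not_smul (x q - x a1) 0
      have hδ0 : δ ≠ 0 := by
        have := hδn 0
        simpa using this
      obtain ⟨t1, ht1⟩ := hline u1 hu1
      obtain ⟨t2, ht2⟩ := hline u2 hu2
      obtain ⟨tm, htm⟩ := hline m hm
      have hperp : ∀ m' ∈ S, G.Adj m m' → (x m - x m') ⬝ᵥ δ = 0 := by
        intro m' hm' _
        obtain ⟨tm', htm'⟩ := hline m' hm'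
        have hmx : x m - x m' = (tm - tm') • (x q - x a1) := by
          rw [htm, htm', sub_smul]; abel
        rw [hmx, smul_dotProduct, hδperp, smul_zero]
      obtain ⟨A, b, hsk, hz, hδ⟩ := delta_motion hS hm δ hperp
      · obtain ⟨ω, hω⟩ := skew3_exists_omega hsk
        have hu10 := hz u1 hu1 hne1
        have hu20 := hz u2 hu2 hne2
        have hcr : cross3 ω (x u1 - x u2) = 0 := by
          rw [← hω, Matrix.mulVec_sub, add_right_cancel (hu10.trans hu20.symm), sub_self]
        have hsubeq : x u1 - x u2 = (t1 - t2) • (x q - x a1) := by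
          rw [ht1, ht2, sub_smul]; abel
        have ht12 : t1 - t2 ≠ 0 := by
          intro hh
          apply hxne
          have : t1 = t2 := by linarith [sub_eq_zero.mp hh]
          rw [ht1, ht2, this]
        have hcre : cross3 ω (x q - x a1) = 0 := by
          rw [hsubeq, cross3_smul_right] at hcr
          rcases smul_eq_zero.mp hcr with hh | hh
          · exact absurd hh ht12
          · exact hh
        have hδval : δ = (tm - t1) • cross3 ω (x q - x a1) := by
          rw [← hδ]
          have hstep : A *ᵥ x m + b = (A *ᵥ x u1 + b) + A *ᵥ (x m - x u1) := by
            rw [Matrix.mulVec_sub]; abel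
          have hmx : x m - x u1 = (tm - t1) • (x q - x a1) := by
            rw [htm, ht1, sub_smul]; abel
          rw [hstep, hu10, zero_add, hω, hmx, cross3_smul_right]
        apply hδ0
        rw [hδval, hcre, smul_zero]
    have hqnej : q ≠ a1 := fun hh => hqne (by rw [hh])
    obtain ⟨z, hzm, hzj, hzq⟩ : ∃ z, z ∈ S ∧ z ≠ a1 ∧ z ≠ q := by
      rcases eq_or_ne a1 a1 with _ | h
      · rcases eq_or_ne a2 q with rfl | h2q
        · exact ⟨a3, h3, h13.symm, h23.symm⟩
        · exact ⟨a2, h2, h12.symm, h2q⟩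
      · exact absurd rfl h
    by_cases hxz : x z = x a1
    · exact hekill z hzm a1 h1 q hqm hzj.symm hzq.symm (fun hh => hqne hh.symm)
    · exact hekill q hqm z hzm a1 h1 hzq hqnej.symm hxz
  · exact htri3
end AuxThree
/-- **Subframework-based rigidity.** For `d = 2` or `3`, a connected framework
`(G, x)` in `ℝ^d` with at least `d + 1` vertices is infinitesimally rigid if and only if there
is a family of extents `h : V → ℕ`, `h i ≥ 1`, such that for every vertex `i` the subframework
induced on the ball `V_i = {j : dist_G i j ≤ h i}` is infinitesimally rigid. -/
theorem infRigid_iff_subframeworks_infRigid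
    {V : Type*} [Fintype V] {d : ℕ} (hd : d = 2 ∨ d = 3)
    (G : SimpleGraph V) (hconn : G.Connected)
    (x : V → Fin d → ℝ) (hn : d + 1 ≤ Fintype.card V) :
    IsInfRigid G x ↔
      ∃ h : V → ℕ, (∀ i : V, 1 ≤ h i) ∧
        ∀ i : V, IsInfRigidOn G x {j : V | G.dist i j ≤ h i} := by
  classical
  constructor
  · -- forward direction
    intro hrigid
    have hdist : ∀ a b : V, G.dist a b ≤ Fintype.card V := by
      intro a b
      obtain ⟨w⟩ := hconn.preconnected a b
      have h1 : G.dist a b ≤ (w.toPath : G.Walk a b).length := SimpleGraph.dist_le _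
      have h2 : (w.toPath : G.Walk a b).length < Fintype.card V :=
        SimpleGraph.Walk.IsPath.length_lt w.toPath.isPath
      omega
    refine ⟨fun _ => Fintype.card V, fun i => by show 1 ≤ Fintype.card V; omega, fun i => ?_⟩
    intro u hu
    have hmotion : IsInfinitesimalMotion G x u := by
      intro k l hadj
      exact hu k l (hdist i k) (hdist i l) hadj
    obtain ⟨A, b, hs, hab⟩ := hrigid u hmotion
    exact ⟨A, b, hs, fun k _ => hab k⟩
  · -- backward direction
    rintro ⟨h, h1, hrig⟩ v hv
    set B : V → Set V := fun i => {j | G.dist i j ≤ h i} with hB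
    have hmem_self : ∀ i : V, i ∈ B i := by
      intro i
      show G.dist i i ≤ h i
      rw [SimpleGraph.dist_self]
      omega
    have hmem_adj : ∀ {i m : V}, G.Adj i m → m ∈ B i := by
      intro i m hadj
      show G.dist i m ≤ h i
      exact le_trans (adj_dist_le_one hadj) (h1 i)
    have hrig' : ∀ i : V, IsInfRigidOn G x (B i) := hrig
    have hrep : ∀ i : V, ∃ (A : Matrix (Fin d) (Fin d) ℝ) (c : Fin d → ℝ), Aᵀ = -A ∧
        ∀ k ∈ B i, v k = A.mulVec (x k) + c :=
      fun i => hrig' i v (fun k l _ _ hadj => hv k l hadj)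
    choose M c hMskew hMv using hrep
    have hdiff : ∀ i j a : V, a ∈ B i → a ∈ B j →
        (M i - M j).mulVec (x a) + (c i - c j) = 0 := by
      intro i j a hai haj
      have e1 := hMv i a hai
      have e2 := hMv j a haj
      have h3 : M i *ᵥ x a + c i = M j *ᵥ x a + c j := e1.symm.trans e2
      rw [Matrix.sub_mulVec, sub_add_sub_comm, h3, sub_self]
    have hNE : Nonempty V := by
      have : 0 < Fintype.card V := by omega
      exact Fintype.card_pos_iff.mp this
    rcases hd with rfl | rfl
    · -- d = 2
      have hadj_eq : ∀ i j : V, G.Adj i j → M i = M j ∧ c i = c j := by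
        intro i j hadj
        have hiBi := hmem_self i
        have hiBj : i ∈ B j := hmem_adj hadj.symm
        have hjBi : j ∈ B i := hmem_adj hadj
        have hjBj := hmem_self j
        by_cases hO : ∀ k : V, k ∈ B i → k ∈ B j → x k = x i
        · exfalso
          have hxji : x j = x i := hO j hjBi hjBj
          have hperp : ∀ m ∈ B j, G.Adj i m → (x i - x m) ⬝ᵥ (Pi.single (0:Fin 2) (1:ℝ)) = 0 := by
            intro m hm hadjm
            have hxm : x m = x i := hO m (hmem_adj hadjm) hm
            rw [hxm, sub_self, zero_dotProduct]
          obtain ⟨A, b, hsk, hz, hδ⟩ := delta_motion (hrig' j) hiBj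
            (Pi.single (0 : Fin 2) (1:ℝ)) hperp
          have h0 := hz j hjBj hadj.ne.symm
          rw [hxji] at h0
          have := congrFun (hδ.symm.trans h0) 0
          simp at this
        · push_neg at hO
          obtain ⟨k, hkBi, hkBj, hkne⟩ := hO
          have hk0 := hdiff i j k hkBi hkBj
          have hi0 := hdiff i j i hiBi hiBj
          have hMM : (M i - M j) *ᵥ x k = (M i - M j) *ᵥ x i :=
            add_right_cancel (hk0.trans hi0.symm)
          have hsub : (M i - M j) *ᵥ (x k - x i) = 0 := by
            rw [Matrix.mulVec_sub, hMM, sub_self]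
          have hzero : M i - M j = 0 :=
            skew2_eq_zero (skew_sub' (hMskew i) (hMskew j)) (sub_ne_zero_of_ne hkne) hsub
          refine ⟨sub_eq_zero.mp hzero, ?_⟩
          rw [hzero, Matrix.zero_mulVec, zero_add] at hi0
          exact sub_eq_zero.mp hi0
      obtain ⟨i0⟩ := hNE
      have key : ∀ (a bb : V) (w : G.Walk a bb), M a = M bb ∧ c a = c bb := by
        intro a bb w
        induction w with
        | nil => exact ⟨rfl, rfl⟩
        | cons hadj p ih =>
          obtain ⟨hm1, hm2⟩ := hadj_eq _ _ hadj
          exact ⟨hm1.trans ih.1, hm2.trans ih.2⟩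
      refine ⟨M i0, c i0, hMskew i0, fun k => ?_⟩
      obtain ⟨w⟩ := hconn.preconnected i0 k
      obtain ⟨hm1, hm2⟩ := key i0 k w
      rw [hMv k k (hmem_self k), ← hm1, ← hm2]
    · -- d = 3
      have hmain : ∀ i j : V, G.Adj i j → FatAt x (B j) → M i = M j ∧ c i = c j := by
        intro i j hadj hFatj
        have hiBi := hmem_self i
        have hiBj : i ∈ B j := hmem_adj hadj.symm
        have hjBi : j ∈ B i := hmem_adj hadj
        have hjBj := hmem_self j
        have hiO : i ∈ B i ∩ B j := ⟨hiBi, hiBj⟩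
        have hjO : j ∈ B i ∩ B j := ⟨hjBi, hjBj⟩
        rcases trichotomy x (B i ∩ B j) i hiO with
          htri | ⟨q, hqO, hqne, hOline⟩ | ⟨a, haO, a', ha'O, a'', ha''O, hne, hnc⟩
        · -- all overlap points at x i: impossible
          exfalso
          have hperp : ∀ m ∈ B j, G.Adj i m → (x i - x m) ⬝ᵥ (Pi.single (0:Fin 3) (1:ℝ)) = 0 := by
            intro m hm hadjm
            rw [htri m ⟨hmem_adj hadjm, hm⟩, sub_self, zero_dotProduct]
          obtain ⟨A, b, hsk, hz, hδ⟩ := delta_motion (hrig' j) hiBj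
            (Pi.single (0:Fin 3) (1:ℝ)) hperp
          have h0 := hz j hjBj hadj.ne.symm
          rw [htri j hjO] at h0
          have := congrFun (hδ.symm.trans h0) 0
          simp at this
        · -- overlap on the line through x i and x q
          exfalso
          have hperpO : ∀ δ : Fin 3 → ℝ, (x q - x i) ⬝ᵥ δ = 0 →
              ∀ m ∈ B j, G.Adj i m → (x i - x m) ⬝ᵥ δ = 0 := by
            intro δ hδperp m hm hadjm
            obtain ⟨t, ht⟩ := hOline m ⟨hmem_adj hadjm, hm⟩
            have hxm : x i - x m = (-t) • (x q - x i) := by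
              rw [ht, neg_smul]; abel
            rw [hxm, smul_dotProduct, hδperp, smul_zero]
          have hjY : j ∈ B j \ {i} := ⟨hjBj, fun hh => hadj.ne (Set.mem_singleton_iff.mp hh).symm⟩
          rcases trichotomy x (B j \ {i}) j hjY with
            htY | ⟨q', hq'Y, hq'ne, hYline⟩ | ⟨a, haY, a', ha'Y, a'', ha''Y, hne, hnc⟩
          · -- B j ∖ {i} all at x j
            by_cases hxij : x i = x j
            · obtain ⟨δ, hδperp, hδn⟩ := exists_perp_not_smul (x q - x i) 0
              have hδ0 : δ ≠ 0 := by
                have := hδn 0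
                simpa using this
              obtain ⟨A, b, hsk, hz, hδ⟩ := delta_motion (hrig' j) hiBj δ (hperpO δ hδperp)
              have h0 := hz j hjBj hadj.ne.symm
              rw [← hxij] at h0
              exact hδ0 (hδ.symm.trans h0)
            · obtain ⟨a, ham, a', ha'm, a'', ha''m, hne, hnc⟩ := hFatj
              have hpos : ∀ k ∈ B j, x k = x j ∨ x k = x i := by
                intro k hk
                by_cases hki : k = i
                · right; rw [hki]
                · left; exact htY k ⟨hk, fun hh => hki (Set.mem_singleton_iff.mp hh)⟩
              have haa' : x a ≠ x a' := fun hh => hne (by rw [hh, sub_self])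
              have hcase : x a'' = x a ∨ x a'' = x a' := by
                rcases hpos a ham with ha1 | ha1 <;> rcases hpos a' ha'm with ha2 | ha2 <;>
                  rcases hpos a'' ha''m with ha3 | ha3
                · exact absurd (ha1.trans ha2.symm) haa'
                · exact absurd (ha1.trans ha2.symm) haa'
                · left; rw [ha3, ha1]
                · right; rw [ha3, ha2]
                · right; rw [ha3, ha2]
                · left; rw [ha3, ha1]
                · exact absurd (ha1.trans ha2.symm) haa'
                · exact absurd (ha1.trans ha2.symm) haa'
              rcases hcase with hh | hh
              · exact hnc 0 (by rw [hh, sub_self, zero_smul])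
              · exact hnc 1 (by rw [one_smul, hh])
          · -- B j ∖ {i} on a line through x j and x q'
            have he'0 : x q' - x j ≠ 0 := sub_ne_zero_of_ne hq'ne
            obtain ⟨δ, hδperp, hδn⟩ :=
              exists_perp_not_smul (x q - x i) (cross3 (x q' - x j) (x i - x j))
            obtain ⟨A, b, hsk, hz, hδ⟩ := delta_motion (hrig' j) hiBj δ (hperpO δ hδperp)
            obtain ⟨ω, hω⟩ := skew3_exists_omega hsk
            have hj0 := hz j hjBj hadj.ne.symm
            have hq'i : q' ≠ i := fun hh => hq'Y.2 (Set.mem_singleton_iff.mpr hh)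
            have hq'0 := hz q' hq'Y.1 hq'i
            have hcr : cross3 ω (x q' - x j) = 0 := by
              rw [← hω, Matrix.mulVec_sub, add_right_cancel (hq'0.trans hj0.symm), sub_self]
            obtain ⟨s, hs⟩ := cross3_eq_zero_parallel hcr he'0
            have hδval : δ = s • cross3 (x q' - x j) (x i - x j) := by
              rw [← hδ]
              have hstep : A *ᵥ x i + b = (A *ᵥ x j + b) + A *ᵥ (x i - x j) := by
                rw [Matrix.mulVec_sub]; abel
              rw [hstep, hj0, zero_add, hω, hs, cross3_smul_left]
            exact hδn s hδval
          · -- B j ∖ {i} has a noncollinear triple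
            obtain ⟨δ, hδperp, hδn⟩ := exists_perp_not_smul (x q - x i) 0
            have hδ0 : δ ≠ 0 := by
              have := hδn 0
              simpa using this
            obtain ⟨A, b, hsk, hz, hδ⟩ := delta_motion (hrig' j) hiBj δ (hperpO δ hδperp)
            have hai : a ≠ i := fun hh => haY.2 (Set.mem_singleton_iff.mpr hh)
            have ha'i : a' ≠ i := fun hh => ha'Y.2 (Set.mem_singleton_iff.mpr hh)
            have ha''i : a'' ≠ i := fun hh => ha''Y.2 (Set.mem_singleton_iff.mpr hh)
            obtain ⟨hA0, hb0⟩ := skew_affine_kill hsk hne hnc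
              (hz a haY.1 hai) (hz a' ha'Y.1 ha'i) (hz a'' ha''Y.1 ha''i)
            apply hδ0
            rw [← hδ, hA0, Matrix.zero_mulVec, zero_add, hb0]
        · -- noncollinear triple in the overlap: conclude equality of representatives
          have hh1 := hdiff i j a haO.1 haO.2
          have hh2 := hdiff i j a' ha'O.1 ha'O.2
          have hh3 := hdiff i j a'' ha''O.1 ha''O.2
          obtain ⟨hA0, hc0⟩ := skew_affine_kill (skew_sub' (hMskew i) (hMskew j)) hne hnc hh1 hh2 hh3
          exact ⟨sub_eq_zero.mp hA0, sub_eq_zero.mp hc0⟩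
      -- every vertex has a neighbour
      have hnbr : ∀ k : V, ∃ m : V, G.Adj k m := by
        intro k
        obtain ⟨z, hz⟩ := Fintype.exists_ne_of_one_lt_card (by omega) k
        obtain ⟨w⟩ := hconn.preconnected k z
        cases w with
        | nil => exact absurd rfl hz
        | cons hadj _ => exact ⟨_, hadj⟩
      have hdeg2_fat : ∀ m a1 a2 : V, G.Adj m a1 → G.Adj m a2 → a1 ≠ a2 → FatAt x (B m) :=
        fun m a1 a2 ha1 ha2 hne =>
          rigid_fat (hrig' m) (hmem_self m) (hmem_adj ha1) (hmem_adj ha2) ha1.ne ha2.ne hne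
      have hfat_or : ∀ k : V, ¬ FatAt x (B k) → ∃ m, G.Adj k m ∧ FatAt x (B m) ∧ k ∈ B m := by
        intro k hkf
        obtain ⟨m, hm⟩ := hnbr k
        have huniq : ∀ m', G.Adj k m' → m' = m := by
          intro m' hm'
          by_contra hne
          exact hkf (hdeg2_fat k m' m hm' hm hne)
        have hz : ∃ z, G.Adj m z ∧ z ≠ k := by
          by_contra hcon
          push_neg at hcon
          have hstay : ∀ (a bb : V) (w : G.Walk a bb), (a = k ∨ a = m) → (bb = k ∨ bb = m) := by
            intro a bb w
            induction w with
            | nil => exact id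
            | cons hadj p ih =>
              intro hu
              apply ih
              rcases hu with rfl | rfl
              · right; exact huniq _ hadj
              · left; exact hcon _ hadj
          obtain ⟨z, hz1, hz2⟩ : ∃ z : V, z ≠ k ∧ z ≠ m := by
            by_contra hcon2
            push_neg at hcon2
            have hsub : (Finset.univ : Finset V) ⊆ {k, m} := by
              intro z _
              by_cases hzk : z = k
              · simp [hzk]
              · simp [hcon2 z hzk]
            have hcard := Finset.card_le_card hsub
            rw [Finset.card_univ] at hcard
            have : ({k, m} : Finset V).card ≤ 2 := by
              refine le_trans (Finset.card_insert_le _ _) ?_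
              simp
            omega
          obtain ⟨w⟩ := hconn.preconnected k z
          rcases hstay k z w (Or.inl rfl) with rfl | rfl
          · exact hz1 rfl
          · exact hz2 rfl
        obtain ⟨z, hmz, hzk⟩ := hz
        exact ⟨m, hm, hdeg2_fat m k z hm.symm hmz (fun hh => hzk hh.symm), hmem_adj hm.symm⟩
      -- propagation of equality of representatives along paths between fat vertices
      have hprop : ∀ (a bb : V) (w : G.Walk a bb), w.IsPath →
          FatAt x (B a) → FatAt x (B bb) → M a = M bb ∧ c a = c bb := by
        intro a bb w
        induction w with
        | nil => intro _ _ _; exact ⟨rfl, rfl⟩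
        | @cons u m bb' hadj p ih =>
          intro hp hfa hfb
          rw [SimpleGraph.Walk.cons_isPath_iff] at hp
          have hfm : FatAt x (B m) := by
            cases p with
            | nil => exact hfb
            | @cons _ mm _ h2 p2 =>
              refine hdeg2_fat m u mm hadj.symm h2 ?_
              intro hh
              apply hp.2
              rw [SimpleGraph.Walk.support_cons]
              right
              rw [hh]
              exact SimpleGraph.Walk.start_mem_support p2
          obtain ⟨e1, e2⟩ := hmain u m hadj hfm
          obtain ⟨f1, f2⟩ := ih hp.1 hfm hfb
          exact ⟨e1.trans f1, e2.trans f2⟩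
      obtain ⟨k0⟩ := hNE
      have hfat0 : ∃ i0, FatAt x (B i0) := by
        by_cases hk : FatAt x (B k0)
        · exact ⟨k0, hk⟩
        · obtain ⟨m, _, hfm, _⟩ := hfat_or k0 hk
          exact ⟨m, hfm⟩
      obtain ⟨i0, hi0⟩ := hfat0
      refine ⟨M i0, c i0, hMskew i0, fun k => ?_⟩
      by_cases hfk : FatAt x (B k)
      · obtain ⟨w⟩ := hconn.preconnected i0 k
        obtain ⟨e1, e2⟩ := hprop i0 k (w.toPath : G.Walk i0 k) w.toPath.isPath hi0 hfk
        rw [hMv k k (hmem_self k), ← e1, ← e2]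
      · obtain ⟨m, hkm, hfm, hkBm⟩ := hfat_or k hfk
        obtain ⟨w⟩ := hconn.preconnected i0 m
        obtain ⟨e1, e2⟩ := hprop i0 m (w.toPath : G.Walk i0 m) w.toPath.isPath hi0 hfm
        rw [hMv m k hkBm, ← e1, ← e2]
end

section
/- Let G be a finite simple graph on vertex set V with positions x : V → ℝ^d, and let V₁, V₂ ⊆ V. Suppose that: (1) every u : V → ℝ^d satisfying ⟨x_i − x_j, u_i − u_j⟩ = 0 for all edges {i,j} ∈ E(G) with i, j ∈ V₁ agrees on V₁ with some trivial motion (i.e. there exist a skew-symmetric A and b ∈ ℝ^d with u_i = A x_i + b for all i ∈ V₁); (2) the analogous condition holds for V₂; and (3) the affine span of {x_j : j ∈ V₁ ∩ V₂} is all of ℝ^d. Then every u : V → ℝ^d satisfying ⟨x_i − x_j, u_i − u_j⟩ = 0 for all edges {i,j} with i, j ∈ V₁ ∪ V₂ agrees on V₁ ∪ V₂ with a single trivial motion; that is, the union of the two subframeworks is infinitesimally rigid. -/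
open Matrix

/-- **gluing lemma.** If the subframeworks induced on `V₁` and on `V₂` are each
infinitesimally rigid and the positions of the vertices of `V₁ ∩ V₂` affinely span `ℝ^d`, then
the subframework induced on `V₁ ∪ V₂` is infinitesimally rigid. -/
theorem infRigidOn_union {V : Type*} [Fintype V] {d : ℕ}
    (G : SimpleGraph V) (x : V → Fin d → ℝ) (V₁ V₂ : Set V)
    (h1 : IsInfRigidOn G x V₁) (h2 : IsInfRigidOn G x V₂)
    (hspan : affineSpan ℝ (x '' (V₁ ∩ V₂)) = ⊤) :
    IsInfRigidOn G x (V₁ ∪ V₂) := by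
  intro u hu
  obtain ⟨A₁, b₁, hA₁, hu₁⟩ :=
    h1 u (fun i j hi hj hadj => hu i j (Or.inl hi) (Or.inl hj) hadj)
  obtain ⟨A₂, b₂, hA₂, hu₂⟩ :=
    h2 u (fun i j hi hj hadj => hu i j (Or.inr hi) (Or.inr hj) hadj)
  -- the two affine maps agree everywhere
  have key : ∀ y : Fin d → ℝ, A₁.mulVec y + b₁ = A₂.mulVec y + b₂ := by
    intro y
    have hy : y ∈ affineSpan ℝ (x '' (V₁ ∩ V₂)) := by
      rw [hspan]; trivial
    refine affineSpan_induction (p := fun y => A₁.mulVec y + b₁ = A₂.mulVec y + b₂) hy ?_ ?_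
    · rintro _ ⟨i, ⟨hi1, hi2⟩, rfl⟩
      rw [← hu₁ i hi1, ← hu₂ i hi2]
    · intro c p q r hp hq hr
      have hvs : ∀ a b : Fin d → ℝ, (a -ᵥ b) = a - b := fun _ _ => rfl
      have hva : ∀ a b : Fin d → ℝ, (a +ᵥ b) = a + b := fun _ _ => rfl
      rw [hvs, hva]
      have e1 : A₁.mulVec (c • (p - q) + r) + b₁
          = c • (A₁.mulVec p - A₁.mulVec q) + (A₁.mulVec r + b₁) := by
        rw [Matrix.mulVec_add, Matrix.mulVec_smul, Matrix.mulVec_sub]; abel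
      have e2 : A₂.mulVec (c • (p - q) + r) + b₂
          = c • (A₂.mulVec p - A₂.mulVec q) + (A₂.mulVec r + b₂) := by
        rw [Matrix.mulVec_add, Matrix.mulVec_smul, Matrix.mulVec_sub]; abel
      rw [e1, e2, hr]
      have hpq : A₁.mulVec p - A₁.mulVec q = A₂.mulVec p - A₂.mulVec q := by
        have := congrArg₂ (· - ·) hp hq
        simpa using this
      rw [hpq]
  refine ⟨A₁, b₁, hA₁, ?_⟩
  rintro i (hi | hi)
  · exact hu₁ i hi
  · rw [hu₂ i hi, key (x i)]
end
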